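/- arXiv:1509.08068 — 3 statements merged into one kernel-verified Lean document; each statement's English description precedes it below -/
import Mathlib

section
/- In the incremental grammar G*, for each incremental category Cⱼ, the string w#ⱼ is derivable from Cⱼ in G* if and only if w is derivable from Cⱼ in G, for every w ∈ T*. -/
open scoped Classical

/-- Map a symbol along a map of terminal alphabets. -/
def liftSymbol {T T' N : Type} (f : T → T') : Symbol T N → Symbol T' N
  | .terminal t => .terminal (f t)
  | .nonterminal n => .nonterminal n

/-- Map a rule along a map of terminal alphabets. -/
def liftRule {T T' N : Type} (f : T → T') (r : ContextFreeRule T N) :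
    ContextFreeRule T' N :=
  ⟨r.input, r.output.map (liftSymbol f)⟩

/-- The incremental grammar `G*`: the terminal alphabet is enlarged to `T ⊕ J`, where `J`
indexes the incremental categories `C j`, the fresh end-of-string marker `#ⱼ` is `Sum.inr j`,
and for each `j` the production `C j → C j #ⱼ` is added. -/
noncomputable def incrementalGrammar {T : Type} (g : ContextFreeGrammar T)
    (J : Type) [Fintype J] (C : J → g.NT) : ContextFreeGrammar (T ⊕ J) where
  NT := g.NT
  initial := g.initial
  rules :=
    g.rules.image (liftRule Sum.inl) ∪
      Finset.univ.image (fun j : J =>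
        (⟨C j, [Symbol.nonterminal (C j), Symbol.terminal (Sum.inr j)]⟩ :
          ContextFreeRule (T ⊕ J) g.NT))

/-
Erasing every end-of-string marker `#ⱼ` turns a derivation in `G*` into one in `G`: a rule of `G`
is untouched, and the rule `Cⱼ → Cⱼ #ⱼ` becomes the empty step. Conversely a derivation in `G` is
one in `G*`, and prefixing it with the step `Cⱼ ⇒ Cⱼ #ⱼ` yields `Cⱼ ⇒* w #ⱼ`.
-/

variable {T T' J N : Type}

lemma ContextFreeRule.Rewrites.map_liftSymbol (f : T → T') {r : ContextFreeRule T N}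
    {u v : List (Symbol T N)} (h : r.Rewrites u v) :
    (liftRule f r).Rewrites (u.map (liftSymbol f)) (v.map (liftSymbol f)) := by
  obtain ⟨p, q, rfl, rfl⟩ := h.exists_parts
  simp only [List.map_append]
  exact rewrites_of_exists_parts (liftRule f r) _ _

def eraseMarker : Symbol (T ⊕ J) N → Option (Symbol T N)
  | .terminal (.inl t) => some (.terminal t)
  | .terminal (.inr _) => none
  | .nonterminal n => some (.nonterminal n)

def eraseMarkers (s : List (Symbol (T ⊕ J) N)) : List (Symbol T N) :=
  s.filterMap eraseMarker

@[simp]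
lemma eraseMarkers_nil : eraseMarkers ([] : List (Symbol (T ⊕ J) N)) = [] := rfl

@[simp]
lemma eraseMarkers_cons_terminal_inl (t : T) (s : List (Symbol (T ⊕ J) N)) :
    eraseMarkers (.terminal (.inl t) :: s) = .terminal t :: eraseMarkers s := rfl

@[simp]
lemma eraseMarkers_cons_terminal_inr (j : J) (s : List (Symbol (T ⊕ J) N)) :
    eraseMarkers (.terminal (.inr j) :: s) = eraseMarkers s := rfl

@[simp]
lemma eraseMarkers_cons_nonterminal (n : N) (s : List (Symbol (T ⊕ J) N)) :
    eraseMarkers (.nonterminal n :: s) = .nonterminal n :: eraseMarkers s := rfl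

@[simp]
lemma eraseMarkers_append (s t : List (Symbol (T ⊕ J) N)) :
    eraseMarkers (s ++ t) = eraseMarkers s ++ eraseMarkers t :=
  List.filterMap_append

@[simp]
lemma eraseMarkers_map_terminal_inl (w : List T) :
    eraseMarkers (w.map fun t => (.terminal (.inl t) : Symbol (T ⊕ J) N)) = w.map .terminal := by
  induction w with
  | nil => rfl
  | cons t w ih => simpa using ih

@[simp]
lemma eraseMarkers_map_liftSymbol_inl (s : List (Symbol T N)) :
    eraseMarkers (s.map (liftSymbol (Sum.inl : T → T ⊕ J))) = s := by
  induction s with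
  | nil => rfl
  | cons a s ih => cases a <;> simpa [liftSymbol] using ih

lemma rewrites_eraseMarkers_of_rewrites_liftRule_inl {r : ContextFreeRule T N}
    {u v : List (Symbol (T ⊕ J) N)} (h : (liftRule Sum.inl r).Rewrites u v) :
    r.Rewrites (eraseMarkers u) (eraseMarkers v) := by
  obtain ⟨p, q, rfl, rfl⟩ := h.exists_parts
  simp only [liftRule, eraseMarkers_append, eraseMarkers_cons_nonterminal, eraseMarkers_nil,
    eraseMarkers_map_liftSymbol_inl]
  exact ContextFreeRule.rewrites_of_exists_parts r _ _

lemma eraseMarkers_eq_of_rewrites_eos {n : N} {j : J}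
    {u v : List (Symbol (T ⊕ J) N)}
    (h : ContextFreeRule.Rewrites ⟨n, [.nonterminal n, .terminal (.inr j)]⟩ u v) :
    eraseMarkers u = eraseMarkers v := by
  obtain ⟨p, q, rfl, rfl⟩ := h.exists_parts
  simp

section incrementalGrammar

variable {g : ContextFreeGrammar T} [Fintype J] {C : J → g.NT}

lemma incrementalGrammar_derives_map_liftSymbol {u v : List (Symbol T g.NT)}
    (h : g.Derives u v) :
    (incrementalGrammar g J C).Derives (u.map (liftSymbol Sum.inl) : List (Symbol (T ⊕ J) g.NT))
      (v.map (liftSymbol Sum.inl) : List (Symbol (T ⊕ J) g.NT)) :=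
  h.lift _ fun _ _ ⟨r, hr, hrw⟩ =>
    ⟨liftRule Sum.inl r, Finset.mem_union_left _ (Finset.mem_image_of_mem _ hr),
      hrw.map_liftSymbol Sum.inl⟩

lemma incrementalGrammar_produces_eos (j : J) :
    (incrementalGrammar g J C).Produces [.nonterminal (C j)]
      [.nonterminal (C j), .terminal (Sum.inr j)] :=
  ⟨⟨C j, _⟩, Finset.mem_union_right _ (Finset.mem_image_of_mem _ (Finset.mem_univ j)),
    ContextFreeRule.Rewrites.input_output⟩

lemma incrementalGrammar_produces_eraseMarkers {u v : List (Symbol (T ⊕ J) g.NT)}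
    (h : (incrementalGrammar g J C).Produces u v) :
    g.Derives (eraseMarkers u) (eraseMarkers v) := by
  obtain ⟨r, hr, hrw⟩ := h
  rcases Finset.mem_union.mp hr with hr | hr
  · obtain ⟨r₀, hr₀, rfl⟩ := Finset.mem_image.mp hr
    exact .single ⟨r₀, hr₀, rewrites_eraseMarkers_of_rewrites_liftRule_inl hrw⟩
  · obtain ⟨j, -, rfl⟩ := Finset.mem_image.mp hr
    exact eraseMarkers_eq_of_rewrites_eos hrw ▸ .refl _

lemma incrementalGrammar_derives_eraseMarkers {u v : List (Symbol (T ⊕ J) g.NT)}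
    (h : (incrementalGrammar g J C).Derives u v) :
    g.Derives (eraseMarkers u) (eraseMarkers v) :=
  h.lift' _ fun _ _ => incrementalGrammar_produces_eraseMarkers

end incrementalGrammar

/-- For each incremental category `Cⱼ`: `Cⱼ ⇒*_{G*} w#ⱼ` iff `Cⱼ ⇒*_G w`, for `w ∈ T*`. -/
theorem incrementalGrammar_derives_eos {T : Type} (g : ContextFreeGrammar T)
    (J : Type) [Fintype J] (C : J → g.NT) (j : J) (w : List T) :
    (incrementalGrammar g J C).Derives [Symbol.nonterminal (C j)]
        ((w.map fun t => Symbol.terminal (Sum.inl t)) ++ [Symbol.terminal (Sum.inr j)]) ↔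
      g.Derives [Symbol.nonterminal (C j)] (w.map Symbol.terminal) := by
  -- `(incrementalGrammar g J C).NT` unfolds to `g.NT` only at default transparency, out of reach
  -- of `simp`; restate both strings over `g.NT` so that the `eraseMarkers` lemmas apply.
  show (incrementalGrammar g J C).Derives ([.nonterminal (C j)] : List (Symbol (T ⊕ J) g.NT))
      ((w.map fun t => .terminal (.inl t)) ++ [.terminal (.inr j)] : List (Symbol (T ⊕ J) g.NT)) ↔ _
  constructor
  · intro h
    simpa using incrementalGrammar_derives_eraseMarkers h
  · intro h
    have hw := incrementalGrammar_derives_map_liftSymbol (C := C) h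
    simp only [List.map_cons, List.map_nil, List.map_map, Function.comp_def, liftSymbol] at hw
    exact (incrementalGrammar_produces_eos j).trans_derives (hw.append_right _)
end

section
/- If B ∈ FIRSTNT(A) (via the inductive computation rules), then there exist sentential forms witnessing a leftmost derivation A ⇒* Bβ; i.e., the inductive characterization of FIRSTNT (place Bᵢ and FIRSTNT(Bᵢ) in FIRSTNT(A) when A → B₁...Bₖ and B₁...B_{i-1} ⇒* ε) is sound with respect to the derivation-based definition. -/
/-- Derivation-based definition of FIRSTNT: nonterminals `B` with `A ⇒* Bβ`
(via a nontrivial derivation). -/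
def FIRSTNT {T : Type} (g : ContextFreeGrammar T) (A : g.NT) : Set g.NT :=
  {B | ∃ β : List (Symbol T g.NT),
    Relation.TransGen g.Produces [Symbol.nonterminal A] (Symbol.nonterminal B :: β)}

/-- The least relation closed under the inductive computation rules for FIRSTNT:
if `A → X₁...Xₖ` is a production, `X₁...X_{i-1} ⇒* ε`, and `Xᵢ` is a nonterminal `B`,
then `B ∈ firstnt(A)`, and `firstnt(B) ⊆ firstnt(A)`. -/
inductive firstnt {T : Type} (g : ContextFreeGrammar T) : g.NT → g.NT → Prop
  | rule (r : ContextFreeRule T g.NT) (hr : r ∈ g.rules)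
      (i : ℕ) (hi : i < r.output.length) (B : g.NT)
      (hB : r.output.get ⟨i, hi⟩ = Symbol.nonterminal B)
      (hε : g.Derives (r.output.take i) []) :
      firstnt g r.input B
  | sub (r : ContextFreeRule T g.NT) (hr : r ∈ g.rules)
      (i : ℕ) (hi : i < r.output.length) (B B' : g.NT)
      (hB : r.output.get ⟨i, hi⟩ = Symbol.nonterminal B)
      (hε : g.Derives (r.output.take i) [])
      (hB' : firstnt g B B') :
      firstnt g r.input B'

section

variable {T : Type} {g : ContextFreeGrammar T}

lemma FIRSTNT_trans {A B C : g.NT} (hB : B ∈ FIRSTNT g A) (hC : C ∈ FIRSTNT g B) :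
    C ∈ FIRSTNT g A := by
  obtain ⟨γ, hAB⟩ := hB
  obtain ⟨β, hBC⟩ := hC
  refine ⟨β ++ γ, hAB.trans_left ?_⟩
  simpa using ContextFreeGrammar.Derives.append_right hBC.to_reflTransGen γ

lemma mem_FIRSTNT_of_nullable_prefix {r : ContextFreeRule T g.NT} (hr : r ∈ g.rules)
    {i : ℕ} (hi : i < r.output.length) {B : g.NT}
    (hB : r.output[i] = Symbol.nonterminal B) (hε : g.Derives (r.output.take i) []) :
    B ∈ FIRSTNT g r.input := by
  have hsplit : r.output = r.output.take i ++ Symbol.nonterminal B :: r.output.drop (i + 1) := by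
    rw [← hB, List.getElem_cons_drop, List.take_append_drop]
  have hstep : g.Produces [Symbol.nonterminal r.input] r.output :=
    ⟨r, hr, ContextFreeRule.Rewrites.input_output⟩
  rw [hsplit] at hstep
  refine ⟨r.output.drop (i + 1), Relation.TransGen.head' hstep ?_⟩
  simpa using hε.append_right (Symbol.nonterminal B :: r.output.drop (i + 1))

end

/-- Soundness: the inductive computation of FIRSTNT is contained in the
derivation-based FIRSTNT. -/
theorem firstnt_sound {T : Type} (g : ContextFreeGrammar T) (A B : g.NT)
    (h : firstnt g A B) : B ∈ FIRSTNT g A := by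
  induction h with
  | rule r hr i hi B hB hε => exact mem_FIRSTNT_of_nullable_prefix hr hi hB hε
  | sub r hr i hi B B' hB hε _ ih =>
    exact FIRSTNT_trans (mem_FIRSTNT_of_nullable_prefix hr hi hB hε) ih
end

section
/- The inductive computation of FIRSTNT is also complete: if A ⇒* Bβ for a nonterminal B, then B is in the least set closed under the rules: for A → X₁...Xₖ ∈ P with X₁...X_{i-1} ⇒* ε and Xᵢ ∈ N, Xᵢ ∈ firstnt(A) and firstnt(Xᵢ) ⊆ firstnt(A). -/
namespace ContextFreeRule

variable {T N : Type*} {r : ContextFreeRule T N}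

lemma Rewrites.append_cases {u v w : List (Symbol T N)} (h : r.Rewrites (u ++ v) w) :
    (∃ u', w = u' ++ v ∧ r.Rewrites u u') ∨ (∃ v', w = u ++ v' ∧ r.Rewrites v v') := by
  induction u generalizing w with
  | nil => exact .inr ⟨w, rfl, h⟩
  | cons a u ih =>
    cases h with
    | head s => exact .inl ⟨r.output ++ u, by simp, .head u⟩
    | cons _ h =>
      rcases ih h with ⟨u', rfl, hu⟩ | ⟨v', rfl, hv⟩
      · exact .inl ⟨a :: u', rfl, hu.cons a⟩
      · exact .inr ⟨v', rfl, hv⟩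

end ContextFreeRule

namespace ContextFreeGrammar

variable {T : Type} {g : ContextFreeGrammar T}

lemma Derives.append_split {u v w : List (Symbol T g.NT)} (h : g.Derives (u ++ v) w) :
    ∃ u' v', w = u' ++ v' ∧ g.Derives u u' ∧ g.Derives v v' := by
  generalize huv : u ++ v = α at h
  induction h using Relation.ReflTransGen.head_induction_on generalizing u v with
  | refl => exact ⟨u, v, huv.symm, .refl u, .refl v⟩
  | head hp _ ih =>
    subst huv
    obtain ⟨r, hr, hrw⟩ := hp
    rcases hrw.append_cases with ⟨u', rfl, hu⟩ | ⟨v', rfl, hv⟩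
    · obtain ⟨u'', v'', rfl, hu', hv'⟩ := ih rfl
      exact ⟨u'', v'', rfl, Produces.trans_derives ⟨r, hr, hu⟩ hu', hv'⟩
    · obtain ⟨u'', v'', rfl, hu', hv'⟩ := ih rfl
      exact ⟨u'', v'', rfl, hu', Produces.trans_derives ⟨r, hr, hv⟩ hv'⟩

lemma derives_append_nil_iff {u v : List (Symbol T g.NT)} :
    g.Derives (u ++ v) [] ↔ g.Derives u [] ∧ g.Derives v [] := by
  refine ⟨fun h => ?_, fun ⟨hu, hv⟩ => (hu.append_right v).trans hv⟩
  obtain ⟨u', v', huv, hu, hv⟩ := h.append_split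
  obtain ⟨rfl, rfl⟩ := List.append_eq_nil_iff.mp huv.symm
  exact ⟨hu, hv⟩

lemma exists_rule_of_produces_nonterminal {A : g.NT} {w : List (Symbol T g.NT)}
    (h : g.Produces [Symbol.nonterminal A] w) : ∃ r ∈ g.rules, r.input = A ∧ r.output = w := by
  obtain ⟨r, hr, hrw⟩ := h
  cases hrw with
  | head _ => exact ⟨r, hr, rfl, by simp⟩
  | cons _ hrw => cases hrw

def FirstReaches (g : ContextFreeGrammar T) (B : g.NT) (α : List (Symbol T g.NT)) : Prop :=
  ∃ γ C δ, α = γ ++ Symbol.nonterminal C :: δ ∧ g.Derives γ [] ∧ Relation.ReflGen (firstnt g) C B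

variable {B : g.NT}

lemma firstReaches_nonterminal_cons {C : g.NT} (hC : Relation.ReflGen (firstnt g) C B)
    (δ : List (Symbol T g.NT)) : FirstReaches g B (Symbol.nonterminal C :: δ) :=
  ⟨[], C, δ, rfl, .refl [], hC⟩

lemma firstReaches_append_iff {u v : List (Symbol T g.NT)} :
    FirstReaches g B (u ++ v) ↔ FirstReaches g B u ∨ (g.Derives u [] ∧ FirstReaches g B v) := by
  constructor
  · rintro ⟨γ, C, δ, huv, hγ, hC⟩
    rcases List.append_eq_append_iff.mp huv with ⟨γ', rfl, rfl⟩ | ⟨u', rfl, hδ⟩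
    · obtain ⟨hu, hγ'⟩ := derives_append_nil_iff.mp hγ
      exact .inr ⟨hu, γ', C, δ, rfl, hγ', hC⟩
    · rcases List.cons_eq_append_iff.mp hδ with ⟨rfl, rfl⟩ | ⟨δ', rfl, rfl⟩
      · exact .inr ⟨by simpa using hγ, firstReaches_nonterminal_cons hC δ⟩
      · exact .inl ⟨γ, C, δ', rfl, hγ, hC⟩
  · rintro (⟨γ, C, δ, rfl, hγ, hC⟩ | ⟨hu, γ, C, δ, rfl, hγ, hC⟩)
    · exact ⟨γ, C, δ ++ v, by simp, hγ, hC⟩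
    · exact ⟨u ++ γ, C, δ, by simp, derives_append_nil_iff.mpr ⟨hu, hγ⟩, hC⟩

lemma firstnt_of_firstReaches_output {r : ContextFreeRule T g.NT} (hr : r ∈ g.rules)
    (h : FirstReaches g B r.output) : firstnt g r.input B := by
  obtain ⟨γ, C, δ, ho, hγ, hC⟩ := h
  have hi : γ.length < r.output.length := by simp [ho]
  have hget : r.output.get ⟨γ.length, hi⟩ = Symbol.nonterminal C := by simp [ho]
  have htake : g.Derives (r.output.take γ.length) [] := by simpa [ho] using hγ
  cases hC with
  | refl => exact .rule r hr γ.length hi B hget htake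
  | single hCB => exact .sub r hr γ.length hi C B hget htake hCB

lemma FirstReaches.of_produces {α α' : List (Symbol T g.NT)} (hα : g.Produces α α')
    (h : FirstReaches g B α') : FirstReaches g B α := by
  obtain ⟨r, hr, hrw⟩ := hα
  obtain ⟨p, q, rfl, rfl⟩ := hrw.exists_parts
  simp only [firstReaches_append_iff, derives_append_nil_iff] at h ⊢
  rcases h with (hp | ⟨hp, hout⟩) | ⟨⟨hp, hout⟩, hq⟩
  · exact .inl (.inl hp)
  · exact .inl (.inr ⟨hp, firstReaches_nonterminal_cons
      (.single (firstnt_of_firstReaches_output hr hout)) []⟩)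
  · exact .inr ⟨⟨hp, Produces.trans_derives ⟨r, hr, .input_output⟩ hout⟩, hq⟩

lemma FirstReaches.of_derives {α α' : List (Symbol T g.NT)} (hα : g.Derives α α')
    (h : FirstReaches g B α') : FirstReaches g B α := by
  induction hα using Relation.ReflTransGen.head_induction_on with
  | refl => exact h
  | head hp _ ih => exact ih.of_produces hp

end ContextFreeGrammar

/-- Completeness: if `A ⇒* Bβ` (nontrivially) for a nonterminal `B`, then `B` is in the
least set computed by the inductive FIRSTNT rules. -/
theorem firstnt_complete {T : Type} (g : ContextFreeGrammar T) (A B : g.NT)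
    (β : List (Symbol T g.NT))
    (h : Relation.TransGen g.Produces [Symbol.nonterminal A]
      (Symbol.nonterminal B :: β)) : firstnt g A B := by
  obtain ⟨w, hAw, hw⟩ := Relation.TransGen.head'_iff.mp h
  obtain ⟨r, hr, rfl, rfl⟩ := ContextFreeGrammar.exists_rule_of_produces_nonterminal hAw
  exact ContextFreeGrammar.firstnt_of_firstReaches_output hr
    ((ContextFreeGrammar.firstReaches_nonterminal_cons .refl β).of_derives hw)
end
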